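/- One has Δ_n^p ∘ Δ_{n−1}^p ∘ ⋯ ∘ Δ_1^p (θ_1^p · θ_2^p ⋯ θ_n^p) = (p!)^{2n} · 1 in Λ_n(p). (Equivalently, the integral on the para-algebra, defined as (1/(p!)^n)·Δ_n^p ∘ ⋯ ∘ Δ_1^p, takes the value (p!)^n on θ_1^p θ_2^p ⋯ θ_n^p.) -/

import Mathlib

/-!
For fixed `i` the generators `θ_i^{(α)}` commute pairwise and square to zero, so in
`θ_i^p = (Σ_α θ_i^{(α)})^p` only the squarefree term survives: `θ_i^p = p! · θ_i^{(1)} ⋯ θ_i^{(p)}`.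
The relations among the `∂_i^{(α)}` give in the same way `Δ_i^p = p! · ∂_i^{(1)} ⋯ ∂_i^{(p)}`.
By the commutation rules, `∂_i^{(1)} ⋯ ∂_i^{(p)}` removes the block `θ_i^{(1)} ⋯ θ_i^{(p)}` from the
front of a product whose other factors are `θ_j^{(β)}` with `j ≠ i`, and every `∂_i^{(α)}`
annihilates such a product. Hence `Δ_1^p, …, Δ_n^p` remove the blocks one by one, leaving
`(p!)^{2n} · 1`.
-/

noncomputable section

open scoped BigOperators

/-- Commutator `[x, y] = x*y - y*x` in an associative ring. -/
def brk {A : Type*} [Ring A] (x y : A) : A := x * y - y * x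

/-- Defining relations of the `ℤ₂^p`-graded commutative algebra `Λ_n(p)`:
`θ_i^{(α)}·θ_j^{(β)} = (−1)^{δ_{αβ}}·θ_j^{(β)}·θ_i^{(α)}`. -/
inductive LamRel (n p : ℕ) : FreeAlgebra ℂ (Fin n × Fin p) → FreeAlgebra ℂ (Fin n × Fin p) → Prop
  | comm : ∀ (i j : Fin n) (α β : Fin p),
      LamRel n p (FreeAlgebra.ι ℂ (i, α) * FreeAlgebra.ι ℂ (j, β))
        ((if α = β then (-1 : ℂ) else 1) • (FreeAlgebra.ι ℂ (j, β) * FreeAlgebra.ι ℂ (i, α)))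

/-- The algebra `Λ_n(p)`. -/
abbrev Lam (n p : ℕ) : Type := RingQuot (LamRel n p)

/-- The generators `θ_i^{(α)}` of `Λ_n(p)`. -/
def θc (n p : ℕ) (i : Fin n) (α : Fin p) : Lam n p :=
  RingQuot.mkAlgHom ℂ (LamRel n p) (FreeAlgebra.ι ℂ (i, α))

/-- `θ_i = Σ_{α=1}^p θ_i^{(α)}`. -/
def θv (n p : ℕ) (i : Fin n) : Lam n p := ∑ α : Fin p, θc n p i α

/-- The inhomogeneous subalgebra `IΛ_n(p)` generated by `θ_1, …, θ_n`. -/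
def ILam (n p : ℕ) : Subalgebra ℂ (Lam n p) :=
  Algebra.adjoin ℂ (Set.range (θv n p))

/-- `Δ_i = Σ_{α=1}^p ∂_i^{(α)}`. -/
def Δop (n p : ℕ) (Dp : Fin n → Fin p → Module.End ℂ (Lam n p)) (i : Fin n) :
    Module.End ℂ (Lam n p) := ∑ α : Fin p, Dp i α

open Nat

section SquareZero

variable {A : Type*} [Ring A]

theorem Commute.add_pow_succ_of_mul_self_eq_zero {a b : A} (h : Commute a b) (ha : a * a = 0)
    (m : ℕ) : (a + b) ^ (m + 1) = b ^ (m + 1) + (m + 1) • (a * b ^ m) := by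
  induction m with
  | zero => simp [add_comm]
  | succ m ih =>
    have hab : a * b ^ m * a = 0 := by
      rw [mul_assoc, ((h.pow_right _).symm).eq, ← mul_assoc, ha, zero_mul]
    rw [pow_succ _ (m + 1), ih, add_mul, mul_add, smul_mul_assoc, mul_add, hab, zero_add,
      mul_assoc, ← pow_succ, ← pow_succ, ((h.pow_right _).symm).eq, succ_nsmul _ (m + 1)]
    abel

theorem List.prod_mul_eq_zero_of_mem {l : List A} (hc : ∀ a ∈ l, ∀ b ∈ l, Commute a b)
    (hsq : ∀ a ∈ l, a * a = 0) {b : A} (hb : b ∈ l) : l.prod * b = 0 := by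
  induction l with
  | nil => simp at hb
  | cons c l ih =>
    rw [List.prod_cons, mul_assoc]
    rcases List.mem_cons.1 hb with rfl | hb
    · have hbl : Commute b l.prod :=
        Commute.list_prod_right _ _ fun x hx => hc _ mem_cons_self _ (mem_cons_of_mem _ hx)
      rw [← hbl.eq, ← mul_assoc, hsq _ mem_cons_self, zero_mul]
    · rw [ih (fun a ha b hb => hc a (mem_cons_of_mem _ ha) b (mem_cons_of_mem _ hb))
        (fun a ha => hsq a (mem_cons_of_mem _ ha)) hb, mul_zero]

theorem List.sum_pow_length_of_mul_self_eq_zero {l : List A}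
    (hc : ∀ a ∈ l, ∀ b ∈ l, Commute a b) (hsq : ∀ a ∈ l, a * a = 0) :
    l.sum ^ l.length = l.length ! • l.prod := by
  induction l with
  | nil => simp
  | cons a l ih =>
    have hc' : ∀ x ∈ l, ∀ y ∈ l, Commute x y := fun x hx y hy =>
      hc x (mem_cons_of_mem _ hx) y (mem_cons_of_mem _ hy)
    have hsq' : ∀ x ∈ l, x * x = 0 := fun x hx => hsq x (mem_cons_of_mem _ hx)
    have hpow := ih hc' hsq'
    have hsum_succ : l.sum ^ (l.length + 1) = 0 := by
      have hmul_sum := List.sum_map_mul_left (l := l) (f := id) (r := l.prod)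
      rw [List.map_id] at hmul_sum
      rw [pow_succ, hpow, smul_mul_assoc, ← hmul_sum, List.sum_eq_zero, smul_zero]
      intro x hx
      obtain ⟨b, hb, rfl⟩ := List.mem_map.1 hx
      exact l.prod_mul_eq_zero_of_mem hc' hsq' hb
    have hcomm : Commute a l.sum :=
      Commute.list_sum_right _ _ fun x hx => hc _ mem_cons_self _ (mem_cons_of_mem _ hx)
    rw [List.sum_cons, List.length_cons,
      hcomm.add_pow_succ_of_mul_self_eq_zero (hsq _ mem_cons_self), hsum_succ, hpow,
      zero_add, mul_smul_comm, smul_smul, List.prod_cons, Nat.factorial_succ]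

end SquareZero

theorem List.prod_ofFn_smul {M N : Type*} [Monoid M] [Monoid N] [MulAction M N]
    [IsScalarTower M N N] [SMulCommClass M N N] {m : ℕ} (c : M) (f : Fin m → N) :
    (List.ofFn fun i => c • f i).prod = c ^ m • (List.ofFn f).prod := by
  have h := List.smul_prod (List.ofFn f) c
  rw [List.length_ofFn, List.map_ofFn] at h
  exact h.symm

section SignedCommutation

variable {R A κ : Type*} [Ring A] [DecidableEq κ]

theorem mul_self_eq_zero_of_signed_comm [Field R] [CharZero R] [Module R A] {f : κ → A}
    (hf : ∀ a b, f a * f b = (if a = b then (-1 : R) else 1) • (f b * f a)) (a : κ) :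
    f a * f a = 0 := by
  have := IsAddTorsionFree.of_isTorsionFree R A
  refine self_eq_neg.mp ?_
  simpa using hf a a

theorem commute_of_signed_comm [Ring R] [Module R A] {f : κ → A}
    (hf : ∀ a b, f a * f b = (if a = b then (-1 : R) else 1) • (f b * f a)) (a b : κ) :
    Commute (f a) (f b) := by
  rcases eq_or_ne a b with rfl | hab
  · exact Commute.refl _
  · simpa [Commute, SemiconjBy, hab] using hf a b

theorem sum_pow_eq_factorial_smul_prod_of_signed_comm [Field R] [CharZero R] [Module R A] {p : ℕ}
    {f : Fin p → A}
    (hf : ∀ a b, f a * f b = (if a = b then (-1 : R) else 1) • (f b * f a)) :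
    (∑ a, f a) ^ p = (p ! : R) • (List.ofFn f).prod := by
  have h := (List.ofFn f).sum_pow_length_of_mul_self_eq_zero
    (by
      simp only [List.mem_ofFn]
      rintro _ ⟨a, rfl⟩ _ ⟨b, rfl⟩
      exact commute_of_signed_comm hf a b)
    (by
      simp only [List.mem_ofFn]
      rintro _ ⟨a, rfl⟩
      exact mul_self_eq_zero_of_signed_comm hf a)
  rwa [List.length_ofFn, List.sum_ofFn, ← Nat.cast_smul_eq_nsmul R] at h

end SignedCommutation

section Derivations

variable {R A ι κ : Type*} [Ring R] [Ring A] [Module R A] [DecidableEq ι] [DecidableEq κ]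

/-- The commutation rule `∂_i^{(α)} θ_j^{(β)} = (−1)^{δ_{αβ}} θ_j^{(β)} ∂_i^{(α)} + δ_{ij} δ_{αβ}`,
evaluated at `w`. -/
def ParaLeibniz (θ : ι → κ → A) (D : ι → κ → Module.End R A) : Prop :=
  ∀ i j α β w, D i α (θ j β * w)
    = (if α = β then (-1 : R) else 1) • (θ j β * D i α w) + if i = j ∧ α = β then w else 0

namespace ParaLeibniz

variable {θ : ι → κ → A} {D : ι → κ → Module.End R A}

theorem apply_prod_mul_of_ne (hD : ParaLeibniz θ D) {i j : ι} (hji : j ≠ i) (α : κ)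
    (l : List κ) {z : A} (hz : D i α z = 0) : D i α ((l.map (θ j)).prod * z) = 0 := by
  induction l with
  | nil => simpa using hz
  | cons β l ih =>
    rw [List.map_cons, List.prod_cons, mul_assoc, hD, ih, mul_zero, smul_zero, zero_add,
      if_neg fun h => hji h.1.symm]

theorem apply_prod_prod_of_not_mem (hD : ParaLeibniz θ D) (hone : ∀ i α, D i α 1 = 0)
    (ks : List κ) {J : List ι} {i : ι} (hi : i ∉ J) (α : κ) :
    D i α ((J.map fun j => (ks.map (θ j)).prod).prod) = 0 := by
  induction J with
  | nil => simpa using hone i α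
  | cons j J ih =>
    rw [List.map_cons, List.prod_cons]
    exact hD.apply_prod_mul_of_ne (fun h => hi (List.mem_cons.2 (Or.inl h.symm))) α ks
      (ih fun h => hi (List.mem_cons_of_mem j h))

theorem prod_apply_mul_of_not_mem (hD : ParaLeibniz θ D) (i : ι) {a : κ} {l : List κ}
    (ha : a ∉ l) (w : A) :
    (l.map (D i)).prod (θ i a * w) = θ i a * (l.map (D i)).prod w := by
  induction l with
  | nil => simp
  | cons b l ih =>
    have hba : b ≠ a := fun h => ha (h ▸ List.mem_cons_self)
    rw [List.map_cons, List.prod_cons, Module.End.mul_apply, Module.End.mul_apply,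
      ih fun h => ha (List.mem_cons_of_mem b h), hD, if_neg hba, if_neg fun h => hba h.2,
      add_zero, one_smul]

theorem prod_apply_prod_mul (hD : ParaLeibniz θ D) (i : ι) {l : List κ} (hl : l.Nodup) {X : A}
    (hX : ∀ β ∈ l, D i β X = 0) : (l.map (D i)).prod ((l.map (θ i)).prod * X) = X := by
  induction l with
  | nil => simp
  | cons a l ih =>
    obtain ⟨ha, hl⟩ := List.nodup_cons.1 hl
    rw [List.map_cons, List.prod_cons, List.map_cons, List.prod_cons, mul_assoc,
      Module.End.mul_apply, hD.prod_apply_mul_of_not_mem i ha,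
      ih hl fun β hβ => hX β (List.mem_cons_of_mem a hβ), hD, if_pos rfl, if_pos ⟨rfl, rfl⟩,
      hX a List.mem_cons_self, mul_zero, smul_zero, zero_add]

/-- Each block of derivations strips off the matching block of generators and annihilates the
blocks to its right. -/
theorem prod_apply_prod (hD : ParaLeibniz θ D) (hone : ∀ i α, D i α 1 = 0) {ks : List κ}
    (hks : ks.Nodup) {I : List ι} (hI : I.Nodup) :
    (I.reverse.map fun i => (ks.map (D i)).prod).prod
      ((I.map fun i => (ks.map (θ i)).prod).prod) = 1 := by
  induction I with
  | nil => simp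
  | cons i I ih =>
    obtain ⟨hi, hI⟩ := List.nodup_cons.1 hI
    rw [List.reverse_cons, List.map_append, List.prod_append, List.map_singleton,
      List.prod_singleton, List.map_cons, List.prod_cons, Module.End.mul_apply,
      hD.prod_apply_prod_mul i hks fun β _ => hD.apply_prod_prod_of_not_mem hone ks hi β, ih hI]

end ParaLeibniz

end Derivations

theorem θc_mul_θc (n p : ℕ) (i j : Fin n) (α β : Fin p) :
    θc n p i α * θc n p j β = (if α = β then (-1 : ℂ) else 1) • (θc n p j β * θc n p i α) := by
  simp only [θc, ← map_mul, ← map_smul]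
  exact RingQuot.mkAlgHom_rel ℂ (LamRel.comm i j α β)

theorem stmt_15_general (n p : ℕ)
    (Dp : Fin n → Fin p → Module.End ℂ (Lam n p))
    (hD1 : ∀ (i : Fin n) (α : Fin p), Dp i α (1 : Lam n p) = 0)
    (hD2 : ∀ (i j : Fin n) (α β : Fin p),
      Dp i α * LinearMap.mulLeft ℂ (θc n p j β)
          - (if α = β then (-1 : ℂ) else 1) • (LinearMap.mulLeft ℂ (θc n p j β) * Dp i α)
        = if i = j ∧ α = β then 1 else 0)
    (hD3 : ∀ (i j : Fin n) (α β : Fin p),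
      Dp i α * Dp j β = (if α = β then (-1 : ℂ) else 1) • (Dp j β * Dp i α))
    :
    (List.ofFn fun t : Fin n => Δop n p Dp t.rev ^ p).prod
        ((List.ofFn fun i : Fin n => θv n p i ^ p).prod)
      = ((p.factorial : ℂ) ^ (2 * n)) • (1 : Lam n p) := by
  have hθ (i : Fin n) : θv n p i ^ p = (p ! : ℂ) • (List.ofFn (θc n p i)).prod :=
    sum_pow_eq_factorial_smul_prod_of_signed_comm (θc_mul_θc n p i i)
  have hΔ (i : Fin n) : Δop n p Dp i ^ p = (p ! : ℂ) • (List.ofFn (Dp i)).prod :=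
    sum_pow_eq_factorial_smul_prod_of_signed_comm (f := Dp i) (hD3 i i)
  have hD : ParaLeibniz (θc n p) Dp := fun i j α β w => by
    have h := LinearMap.congr_fun (hD2 i j α β) w
    simp only [LinearMap.sub_apply, LinearMap.smul_apply, Module.End.mul_apply,
      LinearMap.mulLeft_apply, sub_eq_iff_eq_add] at h
    rw [h, add_comm]
    split_ifs <;> rfl
  have key := hD.prod_apply_prod hD1 (List.nodup_finRange p) (List.nodup_finRange n)
  rw [List.finRange_reverse, List.map_map] at key
  simp only [← List.ofFn_eq_map, Function.comp_def] at key
  simp only [hθ, hΔ, List.prod_ofFn_smul, LinearMap.smul_apply, map_smul]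
  rw [key, smul_smul, ← pow_add, ← two_mul]

/-- `Δ_n^p ∘ ⋯ ∘ Δ_1^p (θ_1^p·θ_2^p⋯θ_n^p) = (p!)^{2n} · 1` in `Λ_n(p)`. -/
theorem stmt_15 (n p : ℕ) (hn : 0 < n) (hp : 0 < p)
    (Dp : Fin n → Fin p → Module.End ℂ (Lam n p))
    (hD1 : ∀ (i : Fin n) (α : Fin p), Dp i α (1 : Lam n p) = 0)
    (hD2 : ∀ (i j : Fin n) (α β : Fin p),
      Dp i α * LinearMap.mulLeft ℂ (θc n p j β)
          - (if α = β then (-1 : ℂ) else 1) • (LinearMap.mulLeft ℂ (θc n p j β) * Dp i α)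
        = if i = j ∧ α = β then 1 else 0)
    (hD3 : ∀ (i j : Fin n) (α β : Fin p),
      Dp i α * Dp j β = (if α = β then (-1 : ℂ) else 1) • (Dp j β * Dp i α))
    :
    (List.ofFn fun t : Fin n => Δop n p Dp t.rev ^ p).prod
        ((List.ofFn fun i : Fin n => θv n p i ^ p).prod)
      = ((p.factorial : ℂ) ^ (2 * n)) • (1 : Lam n p) :=
  stmt_15_general n p Dp hD1 hD2 hD3
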